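/- arXiv:1302.4401 — 2 statements merged into one kernel-verified Lean document; each statement's English description precedes it below -/
import Mathlib

section
/- If Δ is an extremal pure simplicial complex of positive dimension, then there exists a vertex x of Δ such that both lk_Δ(x) and Δ∖x are (pure and) extremal. (Lemma 2.2.) -/
open Finset

/-- The least possible number of `(k-1)`-element sets in the shadow of a family
of `n` distinct `k`-element sets. -/
noncomputable def minShadow (n k : ℕ) : ℕ :=
  sInf {m | ∃ U : Finset (Finset ℕ),
    U.card = n ∧ (∀ A ∈ U, A.card = k) ∧ (Finset.shadow U).card = m}

/-- A (finite abstract) simplicial complex: a nonempty family of finite sets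
closed under taking subsets. -/
def IsComplex (Δ : Finset (Finset ℕ)) : Prop :=
  Δ.Nonempty ∧ ∀ σ ∈ Δ, ∀ τ ⊆ σ, τ ∈ Δ

/-- The facets (maximal faces) of `Δ`. -/
def facets (Δ : Finset (Finset ℕ)) : Finset (Finset ℕ) :=
  Δ.filter fun σ => ∀ τ ∈ Δ, σ ⊆ τ → σ = τ

/-- `Δ` is pure of dimension `d`: every facet has `d + 1` elements. -/
def IsPureDim (Δ : Finset (Finset ℕ)) (d : ℕ) : Prop :=
  ∀ σ ∈ facets Δ, σ.card = d + 1

/-- `Δ` is pure: all facets have the same number of elements. -/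
def IsPure (Δ : Finset (Finset ℕ)) : Prop :=
  ∃ k, ∀ σ ∈ facets Δ, σ.card = k

/-- The link of the vertex `x` in `Δ`:
`lk_Δ(x) = {τ ∈ Δ : x ∉ τ and τ ∪ {x} ∈ Δ}`. -/
def link (Δ : Finset (Finset ℕ)) (x : ℕ) : Finset (Finset ℕ) :=
  Δ.filter fun τ => x ∉ τ ∧ insert x τ ∈ Δ

/-- The deletion of the vertex `x` from `Δ`: `Δ ∖ x = {τ ∈ Δ : x ∉ τ}`. -/
def deletion (Δ : Finset (Finset ℕ)) (x : ℕ) : Finset (Finset ℕ) :=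
  Δ.filter fun τ => x ∉ τ

/-- `Δ` is an extremal complex of dimension `d`: it is a pure simplicial complex
of dimension `d` whose number of `d`-element faces is the least possible among
all families of `(facets Δ).card` sets of size `d + 1`. -/
def IsExtremal (Δ : Finset (Finset ℕ)) (d : ℕ) : Prop :=
  IsComplex Δ ∧ IsPureDim Δ d ∧
  (Δ.filter fun σ => σ.card = d).card = minShadow (facets Δ).card (d + 1)

/-- Vertex decomposability of a pure simplicial complex: either `Δ` consists only
of the empty face, or `Δ` is a single vertex, or some vertex `x` has both link and
deletion pure and vertex decomposable. -/
inductive VertexDecomposable : Finset (Finset ℕ) → Prop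
  | emptyFace : VertexDecomposable {∅}
  | point (x : ℕ) : VertexDecomposable {∅, {x}}
  | step (Δ : Finset (Finset ℕ)) (x : ℕ) (hx : {x} ∈ Δ)
      (hl₁ : IsPure (link Δ x)) (hl₂ : VertexDecomposable (link Δ x))
      (hd₁ : IsPure (deletion Δ x)) (hd₂ : VertexDecomposable (deletion Δ x)) :
      VertexDecomposable Δ


/-!
Fix a vertex `x`, let `L` be the facets through `x` with `x` removed (the facets of the link) and
`F₀` the facets avoiding `x`. The shadow of the facets splits as `#∂F = #∂L + #(L ∪ ∂F₀)`, the
two summands are at least `minShadow #L d` and `max #L (minShadow #F₀ (d+1))`, and Kruskal–Katona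
applied to a family glued from two colex initial segments shows that the sum of these bounds is at
most `minShadow #F (d+1)`. Extremality of `Δ` therefore forces equality in both places: the link is
always extremal, and `#(L ∪ ∂F₀) = max #L (minShadow #F₀ (d+1))`.

If `F₀ = ∅` the deletion is the link. If `#L ≤ minShadow #F₀ (d+1)`, then `L ⊆ ∂F₀`, so the
deletion is pure with facets `F₀`, and `F₀` has minimal shadow. If no vertex is of either kind, then
`∂F₀ ⊆ L` for every vertex, i.e. facets may exchange any element for any vertex, so the facets are
all `(d+1)`-subsets of the vertex set; the Lovász form of Kruskal–Katona then contradicts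
`minShadow #F₀ (d+1) < #L`.
-/

open Finset Finset.Colex Function
open scoped FinsetFamily

namespace Finset

variable {α β : Type*} {f : α → β}

lemma exists_image_eq_of_subset_range [DecidableEq β] {t : Finset β}
    (h : (t : Set β) ⊆ Set.range f) : ∃ s : Finset α, s.image f = t := by
  obtain ⟨s, -, hs⟩ := subset_set_image_iff (s := Set.univ).1 (by rwa [Set.image_univ])
  exact ⟨s, hs⟩

lemma shadow_image_image [DecidableEq α] [DecidableEq β] (hf : Injective f)
    (𝒜 : Finset (Finset α)) : ∂ (𝒜.image (image f)) = (∂ 𝒜).image (image f) := by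
  ext t
  simp only [mem_shadow_iff, mem_image]
  constructor
  · rintro ⟨_, ⟨s, hs, rfl⟩, b, hb, rfl⟩
    obtain ⟨a, ha, rfl⟩ := mem_image.1 hb
    exact ⟨s.erase a, ⟨s, hs, a, ha, rfl⟩, image_erase hf s a⟩
  · rintro ⟨_, ⟨s, hs, a, ha, rfl⟩, rfl⟩
    exact ⟨s.image f, ⟨s, hs, rfl⟩, f a, mem_image_of_mem f ha, (image_erase hf s a).symm⟩

lemma sized_of_image_image [DecidableEq β] (hf : Injective f) {𝒜 : Finset (Finset α)} {k : ℕ}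
    (h : ∀ s ∈ 𝒜.image (image f), #s = k) : (𝒜 : Set (Finset α)).Sized k := fun s hs => by
  rw [← card_image_of_injective s hf]
  exact h _ (mem_image_of_mem _ hs)

variable [LinearOrder α] [LinearOrder β] {𝒜 : Finset (Finset α)} {r : ℕ}

lemma Colex.IsInitSeg.of_image (hf : StrictMono f) (h : IsInitSeg (𝒜.image (image f)) r) :
    IsInitSeg 𝒜 r := by
  refine ⟨sized_of_image_image hf.injective h.1, fun s t hs ⟨hts, ht⟩ => ?_⟩
  have := h.2 (mem_image_of_mem _ hs)
    ⟨(toColex_image_lt_toColex_image hf).2 hts, by rwa [card_image_of_injective t hf.injective]⟩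
  rwa [(image_injective hf.injective).mem_finset_image] at this

lemma Colex.IsInitSeg.image (hf : StrictMono f) (hrange : IsLowerSet (Set.range f))
    (h : IsInitSeg 𝒜 r) : IsInitSeg (𝒜.image (image f)) r := by
  refine ⟨?_, fun s' t hs' ⟨hts, ht⟩ => ?_⟩
  · intro _ hs'
    obtain ⟨s, hs, rfl⟩ := mem_image.1 hs'
    rw [card_image_of_injective s hf.injective]
    exact h.1 hs
  obtain ⟨s, hs, rfl⟩ := mem_image.1 hs'
  obtain ⟨t, rfl⟩ : ∃ t' : Finset α, t'.image f = t := by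
    refine exists_image_eq_of_subset_range fun b hb => ?_
    by_cases hbs : b ∈ s.image f
    · exact coe_image_subset_range hbs
    · obtain ⟨c, hc, -, hbc⟩ := toColex_le_toColex.1 hts.le hb hbs
      exact hrange hbc (coe_image_subset_range hc)
  refine mem_image_of_mem _ (h.2 hs ⟨(toColex_image_lt_toColex_image hf).1 hts, ?_⟩)
  rwa [card_image_of_injective t hf.injective] at ht

end Finset

section Nat

variable {k : ℕ} {𝒜 𝒞 : Finset (Finset ℕ)}

lemma exists_forall_subset_range (𝒜 : Finset (Finset ℕ)) : ∃ M, ∀ s ∈ 𝒜, s ⊆ range M :=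
  let ⟨M, hM⟩ := exists_nat_subset_range (𝒜.sup id)
  ⟨M, fun _ hs => (le_sup (f := id) hs).trans hM⟩

lemma Fin.isLowerSet_range_val (M : ℕ) : IsLowerSet (Set.range (Fin.val : Fin M → ℕ)) :=
  fun _ b hba ⟨i, hi⟩ => ⟨⟨b, hba.trans_lt (hi ▸ i.isLt)⟩, rfl⟩

lemma exists_image_val_eq {M : ℕ} (h : ∀ s ∈ 𝒜, s ⊆ range M) :
    ∃ 𝒜' : Finset (Finset (Fin M)), 𝒜'.image (image Fin.val) = 𝒜 := by
  refine exists_image_eq_of_subset_range fun s hs => exists_image_eq_of_subset_range ?_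
  intro a ha
  exact ⟨⟨a, mem_range.1 (h s hs ha)⟩, rfl⟩

lemma card_image_image_val {M : ℕ} (𝒜' : Finset (Finset (Fin M))) :
    #(𝒜'.image (image Fin.val)) = #𝒜' :=
  card_image_of_injective _ (image_injective Fin.val_injective)

theorem kruskal_katona_nat (h𝒜 : ∀ s ∈ 𝒜, #s = k) (h𝒞 : IsInitSeg 𝒞 k) (hcard : #𝒞 ≤ #𝒜) :
    #(∂ 𝒞) ≤ #(∂ 𝒜) := by
  obtain ⟨M, hM⟩ := exists_forall_subset_range (𝒜 ∪ 𝒞)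
  obtain ⟨𝒜, rfl⟩ := exists_image_val_eq fun s hs => hM s (mem_union_left _ hs)
  obtain ⟨𝒞, rfl⟩ := exists_image_val_eq fun s hs => hM s (mem_union_right _ hs)
  rw [shadow_image_image Fin.val_injective, shadow_image_image Fin.val_injective,
    card_image_image_val, card_image_image_val]
  rw [card_image_image_val, card_image_image_val] at hcard
  exact kruskal_katona (sized_of_image_image Fin.val_injective h𝒜) hcard
    (h𝒞.of_image Fin.val_strictMono)

lemma Finset.Colex.IsInitSeg.shadow_nat (h𝒞 : IsInitSeg 𝒞 k) : IsInitSeg (∂ 𝒞) (k - 1) := by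
  obtain ⟨M, hM⟩ := exists_forall_subset_range 𝒞
  obtain ⟨𝒞, rfl⟩ := exists_image_val_eq hM
  rw [shadow_image_image Fin.val_injective]
  exact ((h𝒞.of_image Fin.val_strictMono).shadow).image Fin.val_strictMono
    (Fin.isLowerSet_range_val M)

lemma minShadow_le_card_shadow (h𝒜 : ∀ s ∈ 𝒜, #s = k) : minShadow #𝒜 k ≤ #(∂ 𝒜) :=
  Nat.sInf_le ⟨𝒜, rfl, h𝒜, rfl⟩

lemma Finset.Colex.IsInitSeg.card_shadow (h𝒞 : IsInitSeg 𝒞 k) : #(∂ 𝒞) = minShadow #𝒞 k := by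
  refine le_antisymm ?_ (minShadow_le_card_shadow fun s hs => h𝒞.1 hs)
  refine le_csInf ⟨_, 𝒞, rfl, fun s hs => h𝒞.1 hs, rfl⟩ ?_
  rintro _ ⟨𝒜, h𝒜𝒞, h𝒜, rfl⟩
  exact kruskal_katona_nat h𝒜 h𝒞 h𝒜𝒞.ge

lemma choose_le_minShadow_choose {m : ℕ} (hk : k ≠ 0) (hkm : k ≤ m) :
    m.choose (k - 1) ≤ minShadow (m.choose k) k := by
  refine le_csInf ⟨_, powersetCard k (range m), by simp, fun s hs => (mem_powersetCard.1 hs).2,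
    rfl⟩ ?_
  rintro _ ⟨𝒜, hcard, h𝒜, rfl⟩
  obtain ⟨M, hM⟩ := exists_forall_subset_range 𝒜
  obtain ⟨𝒜, rfl⟩ := exists_image_val_eq (M := max M m) fun s hs =>
    (hM s hs).trans (range_mono (le_max_left _ _))
  rw [shadow_image_image Fin.val_injective, card_image_image_val]
  rw [card_image_image_val] at hcard
  simpa using kruskal_katona_lovasz_form (i := 1) (Nat.one_le_iff_ne_zero.2 hk) hkm
    (le_max_right _ _) (sized_of_image_image Fin.val_injective h𝒜) hcard.ge

instance : WellFoundedLT (Colex (Finset ℕ)) := (geomSum_ofColex_strictMono le_rfl).wellFoundedLT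

lemma exists_isInitSeg_card_eq (hk : k ≠ 0) : ∀ N, ∃ 𝒞 : Finset (Finset ℕ), IsInitSeg 𝒞 k ∧ #𝒞 = N
  | 0 => ⟨∅, isInitSeg_empty, rfl⟩
  | N + 1 => by
    obtain ⟨𝒞, h𝒞, rfl⟩ := exists_isInitSeg_card_eq hk N
    obtain ⟨t, ⟨htk, ht𝒞⟩, hmin⟩ := wellFounded_lt.has_min
      {t : Colex (Finset ℕ) | #(ofColex t) = k ∧ ofColex t ∉ 𝒞} (by
        obtain ⟨b, hb⟩ := exists_forall_subset_range 𝒞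
        refine ⟨toColex (Ico b (b + k)), by simp, fun hmem => ?_⟩
        have := hb _ hmem (left_mem_Ico.2 (by omega))
        simp at this)
    refine ⟨insert (ofColex t) 𝒞, ⟨?_, fun s u hs ⟨hus, hu⟩ => ?_⟩, card_insert_of_notMem ht𝒞⟩
    · intro s hs
      rcases mem_insert.1 hs with rfl | hs
      exacts [htk, h𝒞.1 hs]
    rcases mem_insert.1 hs with rfl | hs
    · by_contra hu𝒞
      exact hmin (toColex u) ⟨hu, fun h => hu𝒞 (mem_insert_of_mem h)⟩ hus
    · exact mem_insert_of_mem (h𝒞.2 hs ⟨hus, hu⟩)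

end Nat

namespace Finset

variable {α : Type*} [DecidableEq α] (a : α) (𝒜 : Finset (Finset α))

lemma memberSubfamily_shadow : (∂ 𝒜).memberSubfamily a = ∂ (𝒜.memberSubfamily a) := by
  ext s
  simp only [mem_memberSubfamily, mem_shadow_iff_insert_mem, mem_insert, not_or]
  constructor
  · rintro ⟨⟨b, ⟨hba, hbs⟩, hb⟩, has⟩
    exact ⟨b, hbs, by rwa [insert_comm], fun h => hba h.symm, has⟩
  · rintro ⟨b, hbs, hb, hab, has⟩
    exact ⟨⟨b, ⟨fun h => hab h.symm, hbs⟩, by rwa [insert_comm]⟩, has⟩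

lemma nonMemberSubfamily_shadow :
    (∂ 𝒜).nonMemberSubfamily a = 𝒜.memberSubfamily a ∪ ∂ (𝒜.nonMemberSubfamily a) := by
  ext s
  simp only [mem_nonMemberSubfamily, mem_union, mem_memberSubfamily, mem_shadow_iff_insert_mem,
    mem_insert, not_or]
  constructor
  · rintro ⟨⟨b, hbs, hb⟩, has⟩
    obtain rfl | hab := eq_or_ne a b
    · exact Or.inl ⟨hb, has⟩
    · exact Or.inr ⟨b, hbs, hb, hab, has⟩
  · rintro (⟨ha, has⟩ | ⟨b, hbs, hb, -, has⟩)
    exacts [⟨⟨a, has, ha⟩, has⟩, ⟨⟨b, hbs, hb⟩, has⟩]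

lemma card_shadow_eq_add :
    #(∂ 𝒜) = #(∂ (𝒜.memberSubfamily a)) + #(𝒜.memberSubfamily a ∪ ∂ (𝒜.nonMemberSubfamily a)) := by
  rw [← memberSubfamily_shadow, ← nonMemberSubfamily_shadow,
    card_memberSubfamily_add_card_nonMemberSubfamily]

variable {a 𝒜} {ℬ : Finset (Finset α)}

lemma memberSubfamily_union_image_insert (h𝒜 : ∀ s ∈ 𝒜, a ∉ s) (hℬ : ∀ s ∈ ℬ, a ∉ s) :
    (ℬ ∪ 𝒜.image (insert a)).memberSubfamily a = 𝒜 := by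
  have : ℬ.memberSubfamily a = ∅ := eq_empty_of_forall_notMem fun s hs =>
    hℬ _ (mem_memberSubfamily.1 hs).1 (mem_insert_self a s)
  rw [memberSubfamily_union, this, empty_union, memberSubfamily_image_insert h𝒜]

lemma nonMemberSubfamily_union_image_insert (hℬ : ∀ s ∈ ℬ, a ∉ s) :
    (ℬ ∪ 𝒜.image (insert a)).nonMemberSubfamily a = ℬ := by
  rw [nonMemberSubfamily_union, nonMemberSubfamily_image_insert, union_empty]
  exact filter_true_of_mem hℬ

variable {k : ℕ} {s : Finset α} {W : Finset α}

lemma card_of_mem_memberSubfamily (h𝒜 : ∀ t ∈ 𝒜, #t = k + 1) (hs : s ∈ 𝒜.memberSubfamily a) :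
    #s = k := by
  obtain ⟨hs, has⟩ := mem_memberSubfamily.1 hs
  simpa [card_insert_of_notMem has] using h𝒜 _ hs

lemma card_of_mem_nonMemberSubfamily (h𝒜 : ∀ t ∈ 𝒜, #t = k) (hs : s ∈ 𝒜.nonMemberSubfamily a) :
    #s = k :=
  h𝒜 s (mem_nonMemberSubfamily.1 hs).1

lemma memberSubfamily_subset_powersetCard (h𝒜 : ∀ t ∈ 𝒜, #t = k + 1) (hW : ∀ t ∈ 𝒜, t ⊆ W) :
    𝒜.memberSubfamily a ⊆ powersetCard k (W.erase a) := fun s hs =>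
  have ⟨hs', has⟩ := mem_memberSubfamily.1 hs
  mem_powersetCard.2 ⟨subset_erase.2 ⟨(subset_insert a s).trans (hW _ hs'), has⟩,
    card_of_mem_memberSubfamily h𝒜 hs⟩

lemma nonMemberSubfamily_eq_powersetCard (h𝒜 : ∀ t ∈ 𝒜, #t = k) (hW : ∀ t ∈ 𝒜, t ⊆ W)
    (hcomplete : ∀ t ⊆ W, #t = k → t ∈ 𝒜) :
    𝒜.nonMemberSubfamily a = powersetCard k (W.erase a) := by
  ext s
  simp only [mem_nonMemberSubfamily, mem_powersetCard, subset_erase]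
  exact ⟨fun ⟨hs, has⟩ => ⟨⟨hW s hs, has⟩, h𝒜 s hs⟩,
    fun ⟨⟨hsW, has⟩, hs⟩ => ⟨hcomplete s hsW hs, has⟩⟩

lemma mem_of_forall_insert_erase_mem (h𝒜 : ∀ s ∈ 𝒜, #s = k)
    (hexch : ∀ s ∈ 𝒜, ∀ x ∈ W, x ∉ s → ∀ y ∈ s, insert x (s.erase y) ∈ 𝒜)
    {t : Finset α} (hs : s ∈ 𝒜) (htW : t ⊆ W) (ht : #t = k) : t ∈ 𝒜 := by
  induction hn : #(t \ s) generalizing s with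
  | zero =>
    rwa [← eq_of_subset_of_card_le (sdiff_eq_empty_iff_subset.1 (card_eq_zero.1 hn))
      (by rw [h𝒜 s hs, ht])] at hs
  | succ n ih =>
    obtain ⟨x, hx⟩ := card_pos.1 (show 0 < #(t \ s) by omega)
    have hst : #(s \ t) = #(t \ s) := card_sdiff_comm (by rw [h𝒜 s hs, ht])
    obtain ⟨y, hy⟩ := card_pos.1 (show 0 < #(s \ t) by omega)
    rw [mem_sdiff] at hx hy
    refine ih (hexch s hs x (htW hx.1) hx.2 y hy.1) ?_
    have : t \ insert x (s.erase y) = (t \ s).erase x := by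
      ext u
      simp only [mem_sdiff, mem_insert, mem_erase]
      grind
    rw [this, card_erase_of_mem (mem_sdiff.2 hx), hn, Nat.add_sub_cancel]

end Finset

lemma minShadow_add_le {k : ℕ} (hk : k ≠ 0) (p q : ℕ) :
    minShadow (p + q) (k + 1) ≤ minShadow p k + max p (minShadow q (k + 1)) := by
  obtain ⟨𝒞₁, h𝒞₁, rfl⟩ := exists_isInitSeg_card_eq hk p
  obtain ⟨𝒞₂, h𝒞₂, rfl⟩ := exists_isInitSeg_card_eq k.succ_ne_zero q
  obtain ⟨z, hz⟩ := exists_forall_subset_range (𝒞₁ ∪ 𝒞₂)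
  have hz₁ : ∀ s ∈ 𝒞₁, z ∉ s := fun s hs h => by simpa using hz s (mem_union_left _ hs) h
  have hz₂ : ∀ s ∈ 𝒞₂, z ∉ s := fun s hs h => by simpa using hz s (mem_union_right _ hs) h
  set 𝒲 := 𝒞₂ ∪ 𝒞₁.image (insert z)
  have hmem : 𝒲.memberSubfamily z = 𝒞₁ := memberSubfamily_union_image_insert hz₁ hz₂
  have hnon : 𝒲.nonMemberSubfamily z = 𝒞₂ := nonMemberSubfamily_union_image_insert hz₂
  have h𝒲 : ∀ s ∈ 𝒲, #s = k + 1 := by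
    intro s hs
    rcases mem_union.1 hs with hs₂ | hs₁
    · exact h𝒞₂.1 hs₂
    · obtain ⟨t, ht, rfl⟩ := mem_image.1 hs₁
      rw [card_insert_of_notMem (hz₁ t ht), h𝒞₁.1 ht]
  -- `𝒞₁` and `∂ 𝒞₂` are initial segments of the same colex order, hence nested
  have hnested : #(𝒞₁ ∪ ∂ 𝒞₂) = max #𝒞₁ #(∂ 𝒞₂) := by
    rcases h𝒞₁.total (by simpa using h𝒞₂.shadow_nat) with h | h
    · rw [union_eq_right.2 h, max_eq_right (card_le_card h)]
    · rw [union_eq_left.2 h, max_eq_left (card_le_card h)]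
  calc minShadow (#𝒞₁ + #𝒞₂) (k + 1)
      = minShadow #𝒲 (k + 1) := by
        rw [← hmem, ← hnon, card_memberSubfamily_add_card_nonMemberSubfamily]
    _ ≤ #(∂ 𝒲) := minShadow_le_card_shadow h𝒲
    _ = #(∂ 𝒞₁) + #(𝒞₁ ∪ ∂ 𝒞₂) := by rw [card_shadow_eq_add z, hmem, hnon]
    _ = minShadow #𝒞₁ k + max #𝒞₁ (minShadow #𝒞₂ (k + 1)) := by
        rw [hnested, h𝒞₁.card_shadow, h𝒞₂.card_shadow]

def IsShadowMinimal (𝓕 : Finset (Finset ℕ)) (k : ℕ) : Prop :=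
  (∀ s ∈ 𝓕, #s = k) ∧ #(∂ 𝓕) = minShadow #𝓕 k

namespace IsShadowMinimal

variable {𝓕 : Finset (Finset ℕ)} {k : ℕ}

lemma memberSubfamily_and_card_union (hk : k ≠ 0) (h : IsShadowMinimal 𝓕 (k + 1)) (a : ℕ) :
    IsShadowMinimal (𝓕.memberSubfamily a) k ∧
      #(𝓕.memberSubfamily a ∪ ∂ (𝓕.nonMemberSubfamily a))
        = max #(𝓕.memberSubfamily a) (minShadow #(𝓕.nonMemberSubfamily a) (k + 1)) := by
  have hL : ∀ s ∈ 𝓕.memberSubfamily a, #s = k := fun _ => card_of_mem_memberSubfamily h.1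
  have h₁ := minShadow_le_card_shadow hL
  have h₂ : #(𝓕.memberSubfamily a) ≤ #(𝓕.memberSubfamily a ∪ ∂ (𝓕.nonMemberSubfamily a)) :=
    card_le_card subset_union_left
  have h₃ : minShadow #(𝓕.nonMemberSubfamily a) (k + 1)
      ≤ #(𝓕.memberSubfamily a ∪ ∂ (𝓕.nonMemberSubfamily a)) :=
    (minShadow_le_card_shadow fun _ => card_of_mem_nonMemberSubfamily h.1).trans
      (card_le_card subset_union_right)
  have h₄ := minShadow_add_le hk #(𝓕.memberSubfamily a) #(𝓕.nonMemberSubfamily a)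
  rw [card_memberSubfamily_add_card_nonMemberSubfamily, ← h.2, card_shadow_eq_add a] at h₄
  exact ⟨⟨hL, by omega⟩, by omega⟩

lemma subset_shadow_nonMemberSubfamily (hk : k ≠ 0) (h : IsShadowMinimal 𝓕 (k + 1)) {a : ℕ}
    (ha : #(𝓕.memberSubfamily a) ≤ minShadow #(𝓕.nonMemberSubfamily a) (k + 1)) :
    𝓕.memberSubfamily a ⊆ ∂ (𝓕.nonMemberSubfamily a) ∧
      IsShadowMinimal (𝓕.nonMemberSubfamily a) (k + 1) := by
  have hF₀ : ∀ s ∈ 𝓕.nonMemberSubfamily a, #s = k + 1 := fun _ => card_of_mem_nonMemberSubfamily h.1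
  have hunion := (h.memberSubfamily_and_card_union hk a).2
  rw [max_eq_right ha] at hunion
  have hle := minShadow_le_card_shadow hF₀
  have heq : 𝓕.memberSubfamily a ∪ ∂ (𝓕.nonMemberSubfamily a) = ∂ (𝓕.nonMemberSubfamily a) :=
    (eq_of_subset_of_card_le subset_union_right (by omega)).symm
  refine ⟨union_eq_right.1 heq, hF₀, ?_⟩
  rw [← heq] at hle ⊢
  omega

lemma shadow_nonMemberSubfamily_subset (hk : k ≠ 0) (h : IsShadowMinimal 𝓕 (k + 1)) {a : ℕ}
    (ha : minShadow #(𝓕.nonMemberSubfamily a) (k + 1) < #(𝓕.memberSubfamily a)) :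
    ∂ (𝓕.nonMemberSubfamily a) ⊆ 𝓕.memberSubfamily a := by
  have hunion := (h.memberSubfamily_and_card_union hk a).2
  rw [max_eq_left ha.le] at hunion
  exact union_eq_left.1 (eq_of_subset_of_card_le subset_union_left hunion.le).symm

lemma exists_vertex_cone_or_card_le (hk : k ≠ 0) (h : IsShadowMinimal 𝓕 (k + 1))
    (hne : 𝓕.Nonempty) :
    ∃ a ∈ 𝓕.sup id, 𝓕.nonMemberSubfamily a = ∅ ∨
      #(𝓕.memberSubfamily a) ≤ minShadow #(𝓕.nonMemberSubfamily a) (k + 1) := by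
  set W := 𝓕.sup id
  have hsubW : ∀ s ∈ 𝓕, s ⊆ W := fun s hs => le_sup (f := id) hs
  by_contra! hbad
  have hexch : ∀ s ∈ 𝓕, ∀ x ∈ W, x ∉ s → ∀ y ∈ s, insert x (s.erase y) ∈ 𝓕 := by
    intro s hs x hx hxs y hy
    exact (mem_memberSubfamily.1 (h.shadow_nonMemberSubfamily_subset hk (hbad x hx).2
      (erase_mem_shadow (mem_nonMemberSubfamily.2 ⟨hs, hxs⟩) hy))).1
  obtain ⟨s₀, hs₀⟩ := hne
  obtain ⟨a, has₀⟩ : s₀.Nonempty := card_pos.1 (by rw [h.1 s₀ hs₀]; omega)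
  have haW : a ∈ W := hsubW s₀ hs₀ has₀
  have hF₀ : 𝓕.nonMemberSubfamily a = powersetCard (k + 1) (W.erase a) :=
    nonMemberSubfamily_eq_powersetCard h.1 hsubW fun t htW ht =>
      mem_of_forall_insert_erase_mem h.1 hexch hs₀ htW ht
  have hL : #(𝓕.memberSubfamily a) ≤ (#W - 1).choose k := by
    rw [← card_erase_of_mem haW, ← card_powersetCard]
    exact card_le_card (memberSubfamily_subset_powersetCard h.1 hsubW)
  have hkW : k + 1 ≤ #W - 1 := by
    obtain ⟨s, hs⟩ := (hbad a haW).1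
    rw [hF₀, mem_powersetCard] at hs
    rw [← card_erase_of_mem haW, ← hs.2]
    exact card_le_card hs.1
  have hbound := choose_le_minShadow_choose (k := k + 1) k.succ_ne_zero hkW
  have hlt := (hbad a haW).2
  rw [hF₀, card_powersetCard, card_erase_of_mem haW] at hlt
  rw [Nat.add_sub_cancel] at hbound
  omega

end IsShadowMinimal

section Complex

variable {Δ : Finset (Finset ℕ)} {d x : ℕ} {σ : Finset ℕ}

lemma mem_facets : σ ∈ facets Δ ↔ σ ∈ Δ ∧ ∀ τ ∈ Δ, σ ⊆ τ → σ = τ := mem_filter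

lemma exists_mem_facets_superset (hσ : σ ∈ Δ) : ∃ A ∈ facets Δ, σ ⊆ A := by
  obtain ⟨A, hσA, hA, hmax⟩ := Δ.exists_le_maximal hσ
  exact ⟨A, mem_facets.2 ⟨hA, fun τ hτ hAτ => (hmax hτ hAτ).antisymm' hAτ⟩, hσA⟩

lemma IsComplex.facets_nonempty (hΔ : IsComplex Δ) : (facets Δ).Nonempty :=
  let ⟨_, hσ⟩ := hΔ.1
  let ⟨A, hA, _⟩ := exists_mem_facets_superset hσ
  ⟨A, hA⟩

lemma IsComplex.singleton_mem (hΔ : IsComplex Δ) (hx : x ∈ (facets Δ).sup id) : {x} ∈ Δ := by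
  obtain ⟨A, hA, hxA⟩ := mem_sup.1 hx
  exact hΔ.2 A (mem_facets.1 hA).1 {x} (singleton_subset_iff.2 hxA)

lemma filter_card_eq_shadow_facets (hΔ : IsComplex Δ) (hp : IsPureDim Δ d) :
    Δ.filter (fun σ => #σ = d) = ∂ (facets Δ) := by
  ext τ
  rw [mem_filter, mem_shadow_iff_exists_mem_card_add_one]
  constructor
  · rintro ⟨hτ, rfl⟩
    obtain ⟨A, hA, hτA⟩ := exists_mem_facets_superset hτ
    exact ⟨A, hA, hτA, hp A hA⟩
  · rintro ⟨A, hA, hτA, hcard⟩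
    exact ⟨hΔ.2 A (mem_facets.1 hA).1 τ hτA, by have := hp A hA; omega⟩

lemma isExtremal_iff : IsExtremal Δ d ↔ IsComplex Δ ∧ IsShadowMinimal (facets Δ) (d + 1) := by
  refine and_congr_right fun hΔ => ⟨fun ⟨hp, h⟩ => ⟨hp, ?_⟩, fun ⟨hp, h⟩ => ⟨hp, ?_⟩⟩
  · rwa [← filter_card_eq_shadow_facets hΔ hp]
  · rwa [filter_card_eq_shadow_facets hΔ hp]

lemma IsComplex.link (hΔ : IsComplex Δ) (hx : {x} ∈ Δ) : IsComplex (link Δ x) := by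
  refine ⟨⟨∅, mem_filter.2 ⟨hΔ.2 _ hx ∅ (empty_subset _), notMem_empty x, hx⟩⟩, ?_⟩
  intro σ hσ τ hτσ
  rw [_root_.link, mem_filter] at hσ ⊢
  exact ⟨hΔ.2 σ hσ.1 τ hτσ, fun h => hσ.2.1 (hτσ h), hΔ.2 _ hσ.2.2 _ (insert_subset_insert x hτσ)⟩

lemma IsComplex.deletion (hΔ : IsComplex Δ) : IsComplex (deletion Δ x) := by
  obtain ⟨ρ, hρ⟩ := hΔ.1
  refine ⟨⟨∅, mem_filter.2 ⟨hΔ.2 ρ hρ ∅ (empty_subset _), notMem_empty x⟩⟩, ?_⟩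
  intro σ hσ τ hτσ
  rw [_root_.deletion, mem_filter] at hσ ⊢
  exact ⟨hΔ.2 σ hσ.1 τ hτσ, fun h => hσ.2 (hτσ h)⟩

lemma facets_link (hΔ : IsComplex Δ) : facets (link Δ x) = (facets Δ).memberSubfamily x := by
  ext σ
  simp only [mem_memberSubfamily, mem_facets, _root_.link, mem_filter]
  constructor
  · rintro ⟨⟨-, hxσ, hσx⟩, hmax⟩
    refine ⟨⟨hσx, fun τ hτ hστ => ?_⟩, hxσ⟩
    have hxτ : x ∈ τ := hστ (mem_insert_self x σ)
    have hτx : τ.erase x ∈ Δ ∧ x ∉ τ.erase x ∧ insert x (τ.erase x) ∈ Δ :=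
      ⟨hΔ.2 τ hτ _ (erase_subset x τ), notMem_erase x τ, by rwa [insert_erase hxτ]⟩
    rw [hmax _ hτx (subset_erase.2 ⟨(subset_insert x σ).trans hστ, hxσ⟩), insert_erase hxτ]
  · rintro ⟨⟨hσx, hmax⟩, hxσ⟩
    refine ⟨⟨hΔ.2 _ hσx σ (subset_insert x σ), hxσ, hσx⟩, fun τ ⟨_, hxτ, hτx⟩ hστ => ?_⟩
    rw [← erase_insert hxσ, hmax _ hτx (insert_subset_insert x hστ), erase_insert hxτ]

lemma facets_deletion
    (h : (facets Δ).memberSubfamily x ⊆ ∂ ((facets Δ).nonMemberSubfamily x)) :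
    facets (deletion Δ x) = (facets Δ).nonMemberSubfamily x := by
  ext σ
  rw [mem_nonMemberSubfamily, mem_facets, mem_facets]
  simp only [_root_.deletion, mem_filter]
  constructor
  · rintro ⟨⟨hσ, hxσ⟩, hmax⟩
    obtain ⟨B, hB, hσB⟩ : ∃ B ∈ (facets Δ).nonMemberSubfamily x, σ ⊆ B := by
      obtain ⟨A, hA, hσA⟩ := exists_mem_facets_superset hσ
      by_cases hxA : x ∈ A
      · have hAx : A.erase x ∈ (facets Δ).memberSubfamily x :=
          mem_memberSubfamily.2 ⟨by rwa [insert_erase hxA], notMem_erase x A⟩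
        obtain ⟨B, hB, hAB⟩ := exists_subset_of_mem_shadow (h hAx)
        exact ⟨B, hB, (subset_erase.2 ⟨hσA, hxσ⟩).trans hAB⟩
      · exact ⟨A, mem_nonMemberSubfamily.2 ⟨hA, hxA⟩, hσA⟩
    obtain ⟨hB, hxB⟩ := mem_nonMemberSubfamily.1 hB
    rw [hmax B ⟨(mem_facets.1 hB).1, hxB⟩ hσB]
    exact ⟨mem_facets.1 hB, hxB⟩
  · rintro ⟨⟨hσ, hmax⟩, hxσ⟩
    exact ⟨⟨hσ, hxσ⟩, fun τ hτ => hmax τ hτ.1⟩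

lemma deletion_eq_link (hΔ : IsComplex Δ) (h : (facets Δ).nonMemberSubfamily x = ∅) :
    deletion Δ x = link Δ x := by
  ext τ
  simp only [_root_.deletion, _root_.link, mem_filter]
  refine ⟨fun ⟨hτ, hxτ⟩ => ⟨hτ, hxτ, ?_⟩, fun ⟨hτ, hxτ, _⟩ => ⟨hτ, hxτ⟩⟩
  obtain ⟨A, hA, hτA⟩ := exists_mem_facets_superset hτ
  have hxA : x ∈ A := by
    by_contra hxA
    exact notMem_empty A (h ▸ mem_nonMemberSubfamily.2 ⟨hA, hxA⟩)
  exact hΔ.2 A (mem_facets.1 hA).1 _ (insert_subset hxA hτA)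

end Complex

/-- **Lemma 2.2.** If `Δ` is an extremal simplicial complex of positive dimension,
then there exists a vertex `x` of `Δ` such that both the link of `x` and the
deletion of `x` are (pure and) extremal. -/
theorem lemma_two_two (Δ : Finset (Finset ℕ)) (d : ℕ) (hd : 0 < d)
    (h : IsExtremal Δ d) :
    ∃ x, {x} ∈ Δ ∧ (∃ d', IsExtremal (link Δ x) d') ∧
      (∃ d'', IsExtremal (deletion Δ x) d'') := by
  obtain ⟨d, rfl⟩ : ∃ e, d = e + 1 := ⟨d - 1, by omega⟩
  obtain ⟨hΔ, hmin⟩ := isExtremal_iff.1 h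
  obtain ⟨x, hxV, hx⟩ := hmin.exists_vertex_cone_or_card_le d.succ_ne_zero hΔ.facets_nonempty
  have hxΔ := hΔ.singleton_mem hxV
  have hlink : IsExtremal (link Δ x) d := isExtremal_iff.2 ⟨hΔ.link hxΔ, by
    rw [facets_link hΔ]; exact (hmin.memberSubfamily_and_card_union d.succ_ne_zero x).1⟩
  refine ⟨x, hxΔ, ⟨d, hlink⟩, ?_⟩
  rcases hx with hcone | hle
  · exact ⟨d, deletion_eq_link hΔ hcone ▸ hlink⟩
  · obtain ⟨hsub, hmin₀⟩ := hmin.subset_shadow_nonMemberSubfamily d.succ_ne_zero hle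
    exact ⟨d + 1, isExtremal_iff.2 ⟨hΔ.deletion, by rwa [facets_deletion hsub]⟩⟩
end

section
/- For every i ∈ ℕ and positive integers n, k with k ≥ 2, the shadow of S_k^i(n) is itself an initial segment of the squashed order on (k−1)-element sets avoiding i; that is, there exists e such that ∂S_k^i(n) = S_{k-1}^i(e). -/
/-!
Write a member of the shadow as `B` with `A = insert a B ∈ S`, and let `C` precede `B` in the
squashed (colex) order, so that `C` also precedes `A`. Adding to `C` the least `x` with
`x ∉ C` and `x ≠ i` gives a `k`-set avoiding `i` which is either `A` itself or, with
`max (A \ C)` as witness, precedes `A`; either way it lies in `S`, so `C` lies in the shadow.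
-/

open Finset

/-- The squashed (colexicographic) order on finite subsets of `ℕ`:
`A < B` iff `max (A ∖ B) < max (B ∖ A)`. -/
def SquashedLT (A B : Finset ℕ) : Prop :=
  (A \ B).max < (B \ A).max

/-- `S` is the family of the first `n` `k`-element subsets of `ℕ` in the squashed
order: it has `n` members, all of size `k`, and is downward closed in the squashed
order among `k`-element sets. -/
def IsSquashedInitSeg (k n : ℕ) (S : Finset (Finset ℕ)) : Prop :=
  S.card = n ∧ (∀ A ∈ S, A.card = k) ∧
  ∀ A ∈ S, ∀ B : Finset ℕ, B.card = k → SquashedLT B A → B ∈ S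

/-- `S` is the family of the first `n` `k`-element subsets of `ℕ` not containing `i`,
in the squashed order. -/
def IsSquashedInitSegAvoiding (i k n : ℕ) (S : Finset (Finset ℕ)) : Prop :=
  S.card = n ∧ (∀ A ∈ S, A.card = k ∧ i ∉ A) ∧
  ∀ A ∈ S, ∀ B : Finset ℕ, B.card = k → i ∉ B → SquashedLT B A → B ∈ S

open Finset.Colex
open scoped FinsetFamily

theorem squashedLT_iff_toColex_lt {A B : Finset ℕ} :
    SquashedLT A B ↔ toColex A < toColex B := by
  rw [SquashedLT, toColex_lt_toColex_iff_exists_forall_lt]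
  constructor
  · intro h
    obtain ⟨a, ha⟩ : ∃ a : ℕ, (B \ A).max = a :=
      max_of_nonempty (nonempty_iff_ne_empty.2 fun h' => by simp [h'] at h)
    obtain ⟨haB, haA⟩ := mem_sdiff.1 (mem_of_max ha)
    exact ⟨a, haB, haA, fun b hbA hbB =>
      WithBot.coe_lt_coe.1 ((le_max (mem_sdiff.2 ⟨hbA, hbB⟩)).trans_lt (h.trans_eq ha))⟩
  · rintro ⟨a, haB, haA, ha⟩
    calc (A \ B).max < a := (Finset.sup_lt_iff (WithBot.bot_lt_coe a)).2 fun b hb =>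
            WithBot.coe_lt_coe.2 (ha b (mem_sdiff.1 hb).1 (mem_sdiff.1 hb).2)
      _ ≤ (B \ A).max := le_max (mem_sdiff.2 ⟨haB, haA⟩)

theorem exists_insert_le_of_toColex_lt {α : Type*} [LinearOrder α] [WellFoundedLT α]
    {U : Set α} {A C : Finset α} (hAU : ↑A ⊆ U) (hcard : #A = #C + 1)
    (hCA : toColex C < toColex A) :
    ∃ x ∈ U, x ∉ C ∧ toColex (insert x C) ≤ toColex A := by
  obtain ⟨w, hwA, hwC, hw⟩ := toColex_lt_toColex_iff_exists_forall_lt.1 hCA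
  have hAC : (A \ C).Nonempty := ⟨w, mem_sdiff.2 ⟨hwA, hwC⟩⟩
  set M := (A \ C).max' hAC
  obtain ⟨hMA, hMC⟩ : M ∈ A ∧ M ∉ C := mem_sdiff.1 (max'_mem _ hAC)
  have hCM : ∀ y ∈ C, y ∉ A → y < M := fun y hyC hyA =>
    (hw y hyC hyA).trans_le (le_max' _ _ (mem_sdiff.2 ⟨hwA, hwC⟩))
  obtain ⟨x, ⟨hxU, hxC⟩, hxmin⟩ :=
    wellFounded_lt.has_min {y | y ∈ U ∧ y ∉ C} ⟨M, hAU hMA, hMC⟩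
  refine ⟨x, hxU, hxC, ?_⟩
  obtain hxM | hxM := (not_lt.1 (hxmin M ⟨hAU hMA, hMC⟩)).lt_or_eq
  · refine (toColex_lt_toColex_iff_exists_forall_lt.2 ⟨M, hMA, ?_, fun y hy hyA => ?_⟩).le
    · exact fun hM => (mem_insert.1 hM).elim hxM.ne' hMC
    · obtain rfl | hyC := mem_insert.1 hy
      exacts [hxM, hCM y hyC hyA]
  · -- `A \ C = {M}`: its elements are `≤ M` by choice of `M` and `≥ x = M` by choice of `x`
    have hAsub : A ⊆ insert x C := fun b hbA => by
      by_cases hbC : b ∈ C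
      · exact mem_insert_of_mem hbC
      · have hbM : b ≤ M := le_max' _ _ (mem_sdiff.2 ⟨hbA, hbC⟩)
        have hxb : x ≤ b := not_lt.1 (hxmin b ⟨hAU hbA, hbC⟩)
        rw [le_antisymm hbM (hxM ▸ hxb)]
        exact hxM ▸ mem_insert_self x C
    rw [eq_of_subset_of_card_le hAsub (by rw [card_insert_of_notMem hxC, hcard])]

theorem shadow_initSegAvoiding_general (i n k : ℕ)
    (S : Finset (Finset ℕ)) (hS : IsSquashedInitSegAvoiding i k n S) :
    ∃ e, IsSquashedInitSegAvoiding i (k - 1) e (Finset.shadow S) := by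
  obtain ⟨-, hmem, hdown⟩ := hS
  refine ⟨#(∂ S), rfl, fun C hC => ?_, fun B hB C hCk hiC hCB => ?_⟩
  · obtain ⟨A, hA, a, ha, rfl⟩ := mem_shadow_iff.1 hC
    obtain ⟨hAk, hiA⟩ := hmem A hA
    exact ⟨by rw [card_erase_of_mem ha, hAk], fun h => hiA (mem_of_mem_erase h)⟩
  obtain ⟨a, haB, hA⟩ := mem_shadow_iff_insert_mem.1 hB
  obtain ⟨hAk, hiA⟩ := hmem _ hA
  have hcard : #(insert a B) = #C + 1 := by
    rw [card_insert_of_notMem haB] at hAk ⊢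
    omega
  have hCA : toColex C < toColex (insert a B) :=
    (squashedLT_iff_toColex_lt.1 hCB).trans_le (toColex_le_toColex_of_subset (subset_insert a B))
  obtain ⟨x, hxi, hxC, hle⟩ := exists_insert_le_of_toColex_lt (U := {j | j ≠ i})
    (fun j hj => ne_of_mem_of_not_mem hj hiA) hcard hCA
  refine mem_shadow_iff_insert_mem.2 ⟨x, hxC, ?_⟩
  obtain h | h := hle.eq_or_lt
  · rwa [toColex_inj.1 h]
  · refine hdown _ hA _ (by rw [card_insert_of_notMem hxC, ← hcard, hAk]) ?_
      (squashedLT_iff_toColex_lt.2 h)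
    exact fun hi => (mem_insert.1 hi).elim (fun h => hxi h.symm) hiC

/-- The shadow of `S_k^i(n)` is itself an initial segment of the squashed order on
`(k-1)`-element sets avoiding `i`: there exists `e` with `∂(S_k^i(n)) = S_{k-1}^i(e)`. -/
theorem shadow_initSegAvoiding (i n k : ℕ) (hn : 0 < n) (hk : 2 ≤ k)
    (S : Finset (Finset ℕ)) (hS : IsSquashedInitSegAvoiding i k n S) :
    ∃ e, IsSquashedInitSegAvoiding i (k - 1) e (Finset.shadow S) :=
  shadow_initSegAvoiding_general i n k S hS
end
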